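/- Let φ be an LTLf formula over X ∪ Y, ψ = t(φ) ∧ alive ∧ (alive U G¬alive) its translated LTL formula over X ∪ Y ∪ {alive} with alive a fresh atom assigned to the agent, and ψ_A an arbitrary LTL formula over X ∪ Y (the environment assumption). Then φ is realizable with respect to ⟨X, Y⟩ under assumption ψ_A if and only if the LTL formula ψ_A → ψ is realizable with respect to ⟨X, Y ∪ {alive}⟩. -/

import Mathlib

namespace LTLfSynth

/-! ### Syntax of LTL / LTLf formulas -/

/-- Syntax of LTL / LTLf formulas over atomic propositions `P`
(with the standard abbreviation `true` included as a constant). -/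
inductive Formula (P : Type) : Type
  | tt : Formula P
  | atom : P → Formula P
  | not : Formula P → Formula P
  | and : Formula P → Formula P → Formula P
  | next : Formula P → Formula P
  | until_ : Formula P → Formula P → Formula P

namespace Formula

/-- LTLf satisfaction at position `i` of a finite trace `ρ` (a list of subsets of `P`). -/
def finSatAt {P : Type} (ρ : List (Set P)) : Formula P → ℕ → Prop
  | tt, _ => True
  | atom a, i => a ∈ ρ.getD i ∅
  | not φ, i => ¬ finSatAt ρ φ i
  | and φ ψ, i => finSatAt ρ φ i ∧ finSatAt ρ ψ i
  | next φ, i => i + 1 < ρ.length ∧ finSatAt ρ φ (i + 1)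
  | until_ φ ψ, i => ∃ j, i ≤ j ∧ j < ρ.length ∧ finSatAt ρ ψ j ∧
      ∀ k, i ≤ k → k < j → finSatAt ρ φ k

/-- `ρ ⊨ φ` for a finite trace. -/
def finSat {P : Type} (ρ : List (Set P)) (φ : Formula P) : Prop := finSatAt ρ φ 0

/-- LTL satisfaction at position `i` of an infinite trace `ρ : ℕ → Set P`. -/
def infSatAt {P : Type} (ρ : ℕ → Set P) : Formula P → ℕ → Prop
  | tt, _ => True
  | atom a, i => a ∈ ρ i
  | not φ, i => ¬ infSatAt ρ φ i
  | and φ ψ, i => infSatAt ρ φ i ∧ infSatAt ρ ψ i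
  | next φ, i => infSatAt ρ φ (i + 1)
  | until_ φ ψ, i => ∃ j, i ≤ j ∧ infSatAt ρ ψ j ∧
      ∀ k, i ≤ k → k < j → infSatAt ρ φ k

/-- `ρ ⊨ φ` for an infinite trace. -/
def infSat {P : Type} (ρ : ℕ → Set P) (φ : Formula P) : Prop := infSatAt ρ φ 0

/-- `F φ = true U φ`. -/
def F {P : Type} (φ : Formula P) : Formula P := until_ tt φ

/-- `G φ = ¬ F ¬ φ`. -/
def G {P : Type} (φ : Formula P) : Formula P := not (F (not φ))

/-- `φ ∨ ψ`. -/
def or {P : Type} (φ ψ : Formula P) : Formula P := not (and (not φ) (not ψ))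

/-- `φ → ψ`. -/
def imp {P : Type} (φ ψ : Formula P) : Formula P := or (not φ) ψ

/-- Atom renaming. -/
def map {P Q : Type} (f : P → Q) : Formula P → Formula Q
  | tt => tt
  | atom a => atom (f a)
  | not φ => not (map f φ)
  | and φ ψ => and (map f φ) (map f ψ)
  | next φ => next (map f φ)
  | until_ φ ψ => until_ (map f φ) (map f ψ)

end Formula

/-! ### The LTLf-to-LTL translation with the fresh atom `alive` (modeled as `none`) -/

/-- The fresh atom `alive` over `P ∪ {alive}`, modeled as `Option P` with `alive = none`. -/
def alive {P : Type} : Formula (Option P) := Formula.atom none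

/-- The translation `t` from LTLf over `P` to LTL over `P ∪ {alive}`. -/
def t {P : Type} : Formula P → Formula (Option P)
  | .tt => .tt
  | .atom a => .atom (some a)
  | .not φ => .not (t φ)
  | .and φ ψ => .and (t φ) (t ψ)
  | .next φ => .next (.and alive (t φ))
  | .until_ φ ψ => .until_ (t φ) (.and alive (t ψ))

/-- `ψ = t(φ) ∧ alive ∧ (alive U G ¬alive)`. -/
def transLTL {P : Type} (φ : Formula P) : Formula (Option P) :=
  .and (t φ) (.and alive (.until_ alive (Formula.G (.not alive))))

/-- Extension equivalence `τ ≈ τ'`: `τ'(i) = τ[i] ∪ {alive}` for `i < |τ|` and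
`τ'(i) = ∅` for `i ≥ |τ|`. -/
def extEquiv {P : Type} (τ : List (Set P)) (τ' : ℕ → Set (Option P)) : Prop :=
  (∀ i, i < τ.length → τ' i = insert none (Option.some '' τ.getD i ∅)) ∧
  (∀ i, τ.length ≤ i → τ' i = ∅)

/-! ### Boolean formulas (environment constraints) -/

/-- Boolean (propositional) formulas over variables `V`. -/
inductive BForm (V : Type) : Type
  | tt : BForm V
  | atom : V → BForm V
  | not : BForm V → BForm V
  | and : BForm V → BForm V → BForm V

namespace BForm

/-- `X ⊨ α` for an assignment `X ⊆ V`. -/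
def eval {V : Type} (X : Set V) : BForm V → Prop
  | tt => True
  | atom v => v ∈ X
  | not b => ¬ eval X b
  | and b c => eval X b ∧ eval X c

/-- View a Boolean formula as a temporal formula, relocating the atoms by `emb`. -/
def toFormula {V P : Type} (emb : V → P) : BForm V → Formula P
  | tt => .tt
  | atom v => .atom (emb v)
  | not b => .not (toFormula emb b)
  | and b c => .and (toFormula emb b) (toFormula emb c)

end BForm

/-! ### Traces, strategies and plays over a DFA arena -/

/-- Combine an environment assignment `X ⊆ Vx` with an agent assignment `Y ⊆ Vy` into
an assignment over `X ∪ Y` (modeled as `Vx ⊕ Vy`). -/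
def combine {Vx Vy : Type} (X : Set Vx) (Y : Set Vy) : Set (Vx ⊕ Vy) :=
  {v | Sum.elim (· ∈ X) (· ∈ Y) v}

/-- The history `[a₀, …, a_{j-1}]` of a sequence. -/
def histList {A : Type} (lam : ℕ → A) (j : ℕ) : List A :=
  (List.range j).map lam

/-- A sequence of environment assignments is `α`-fair if `α` holds infinitely often. -/
def fairSeq {Vx : Type} (α : BForm Vx) (lam : ℕ → Set Vx) : Prop :=
  ∀ n, ∃ j, n ≤ j ∧ α.eval (lam j)

/-- A sequence of environment assignments is `α`-stable if `α` holds at all but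
finitely many positions. -/
def stableSeq {Vx : Type} (α : BForm Vx) (lam : ℕ → Set Vx) : Prop :=
  ∃ n, ∀ j, n ≤ j → α.eval (lam j)

/-- The state visited at round `j` of the play from `s` induced by environment sequence
`lam` and agent strategy `g`. -/
def playState {Vx Vy S : Type} (δ : S → Set (Vx ⊕ Vy) → S) (g : List (Set Vx) → Set Vy)
    (s : S) (lam : ℕ → Set Vx) : ℕ → S
  | 0 => s
  | j + 1 => δ (playState δ g s lam j) (combine (lam j) (g (histList lam (j + 1))))

/-- The state visited at round `j` of the play from `s` in which the environment follows
strategy `h` (so `X_j = h (Y₀, …, Y_{j-1})`) and the agent plays the sequence `mu`. -/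
def envPlayState {Vx Vy S : Type} (δ : S → Set (Vx ⊕ Vy) → S) (h : List (Set Vy) → Set Vx)
    (s : S) (mu : ℕ → Set Vy) : ℕ → S
  | 0 => s
  | j + 1 => δ (envPlayState δ h s mu j) (combine (h (histList mu j)) (mu j))

/-- `s` is an agent winning state of the fair DFA game `⟨G, α⟩`. -/
def agentWinsFairFrom {Vx Vy S : Type} (δ : S → Set (Vx ⊕ Vy) → S) (Acc : Set S)
    (α : BForm Vx) (s : S) : Prop :=
  ∃ g : List (Set Vx) → Set Vy, ∀ lam : ℕ → Set Vx,
    ¬ fairSeq α lam ∨ ∃ j, playState δ g s lam j ∈ Acc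

/-- `s` is an agent winning state of the stable DFA game `⟨G, α⟩`. -/
def agentWinsStableFrom {Vx Vy S : Type} (δ : S → Set (Vx ⊕ Vy) → S) (Acc : Set S)
    (α : BForm Vx) (s : S) : Prop :=
  ∃ g : List (Set Vx) → Set Vy, ∀ lam : ℕ → Set Vx,
    ¬ stableSeq α lam ∨ ∃ j, playState δ g s lam j ∈ Acc

/-- `s` is an environment winning state of the fair DFA game `⟨G, α⟩`. -/
def envWinsFairFrom {Vx Vy S : Type} (δ : S → Set (Vx ⊕ Vy) → S) (Acc : Set S)
    (α : BForm Vx) (s : S) : Prop :=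
  ∃ h : List (Set Vy) → Set Vx, ∀ mu : ℕ → Set Vy,
    fairSeq α (fun j => h (histList mu j)) ∧ ∀ j, envPlayState δ h s mu j ∉ Acc

/-- `s` is an environment winning state of the stable DFA game `⟨G, α⟩`. -/
def envWinsStableFrom {Vx Vy S : Type} (δ : S → Set (Vx ⊕ Vy) → S) (Acc : Set S)
    (α : BForm Vx) (s : S) : Prop :=
  ∃ h : List (Set Vy) → Set Vx, ∀ mu : ℕ → Set Vy,
    stableSeq α (fun j => h (histList mu j)) ∧ ∀ j, envPlayState δ h s mu j ∉ Acc

/-! ### The fixpoint computations -/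

section Fixpoints

variable {Vx Vy S : Type} (δ : S → Set (Vx ⊕ Vy) → S) (Acc : Set S) (α : BForm Vx)

/-- `{s | ∃X ∀Y, (X ⊨ α ∧ δ(s, X∪Y) ∈ A ∖ Acc) ∨ δ(s, X∪Y) ∈ B ∖ Acc}`. -/
def envStep (A B : Set S) : Set S :=
  {s | ∃ X : Set Vx, ∀ Y : Set Vy,
    (α.eval X ∧ δ s (combine X Y) ∈ A \ Acc) ∨ δ s (combine X Y) ∈ B \ Acc}

/-- `{s | ∀X ∃Y, (X ⊭ α ∨ δ(s, X∪Y) ∈ A ∪ Acc) ∧ δ(s, X∪Y) ∈ B ∪ Acc}`. -/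
def sysStep (A B : Set S) : Set S :=
  {s | ∀ X : Set Vx, ∃ Y : Set Vy,
    (¬ α.eval X ∨ δ s (combine X Y) ∈ A ∪ Acc) ∧ δ s (combine X Y) ∈ B ∪ Acc}

lemma envStep_mono {A₁ A₂ B₁ B₂ : Set S} (hA : A₁ ⊆ A₂) (hB : B₁ ⊆ B₂) :
    envStep δ Acc α A₁ B₁ ⊆ envStep δ Acc α A₂ B₂ := by
  rintro s ⟨X, hX⟩
  refine ⟨X, fun Y => ?_⟩
  rcases hX Y with ⟨h1, h2, h3⟩ | ⟨h2, h3⟩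
  · exact Or.inl ⟨h1, hA h2, h3⟩
  · exact Or.inr ⟨hB h2, h3⟩

lemma sysStep_mono {A₁ A₂ B₁ B₂ : Set S} (hA : A₁ ⊆ A₂) (hB : B₁ ⊆ B₂) :
    sysStep δ Acc α A₁ B₁ ⊆ sysStep δ Acc α A₂ B₂ := by
  intro s hs X
  obtain ⟨Y, h1, h2⟩ := hs X
  refine ⟨Y, ?_, ?_⟩
  · rcases h1 with h | h | h
    · exact Or.inl h
    · exact Or.inr (Or.inl (hA h))
    · exact Or.inr (Or.inr h)
  · rcases h2 with h | h
    · exact Or.inl (hB h)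
    · exact Or.inr h

/-- Inner fixpoint operator `Ẑ ↦ envStep Z Ẑ` (for `Env_f`). -/
def envFairInner (Z : Set S) : Set S →o Set S :=
  ⟨fun Zh => envStep δ Acc α Z Zh, fun _ _ h => envStep_mono δ Acc α subset_rfl h⟩

/-- Outer operator `Z ↦ μẐ. envStep Z Ẑ` (for `Env_f`). -/
def envFairOuter : Set S →o Set S :=
  ⟨fun Z => OrderHom.lfp (envFairInner δ Acc α Z),
   fun _ _ h => OrderHom.lfp.monotone fun _ => envStep_mono δ Acc α h subset_rfl⟩

/-- `Env_f = νZ. μẐ. {s | ∃X ∀Y, (X ⊨ α ∧ δ(s,X∪Y) ∈ Z∖Acc) ∨ δ(s,X∪Y) ∈ Ẑ∖Acc}`. -/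
def EnvFair : Set S := OrderHom.gfp (envFairOuter δ Acc α)

/-- Inner fixpoint operator `Ẑ ↦ sysStep Z Ẑ` (for `Sys_f`). -/
def sysFairInner (Z : Set S) : Set S →o Set S :=
  ⟨fun Zh => sysStep δ Acc α Z Zh, fun _ _ h => sysStep_mono δ Acc α subset_rfl h⟩

/-- Outer operator `Z ↦ νẐ. sysStep Z Ẑ` (for `Sys_f`). -/
def sysFairOuter : Set S →o Set S :=
  ⟨fun Z => OrderHom.gfp (sysFairInner δ Acc α Z),
   fun _ _ h => OrderHom.gfp.monotone fun _ => sysStep_mono δ Acc α h subset_rfl⟩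

/-- `Sys_f = μZ. νẐ. {s | ∀X ∃Y, (X ⊭ α ∨ δ(s,X∪Y) ∈ Z∪Acc) ∧ δ(s,X∪Y) ∈ Ẑ∪Acc}`. -/
def SysFair : Set S := OrderHom.lfp (sysFairOuter δ Acc α)

/-- Inner fixpoint operator `Ẑ ↦ envStep Ẑ Z` (for `Env_st`). -/
def envStInner (Z : Set S) : Set S →o Set S :=
  ⟨fun Zh => envStep δ Acc α Zh Z, fun _ _ h => envStep_mono δ Acc α h subset_rfl⟩

/-- Outer operator `Z ↦ νẐ. envStep Ẑ Z` (for `Env_st`). -/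
def envStOuter : Set S →o Set S :=
  ⟨fun Z => OrderHom.gfp (envStInner δ Acc α Z),
   fun _ _ h => OrderHom.gfp.monotone fun _ => envStep_mono δ Acc α subset_rfl h⟩

/-- `Env_st = μZ. νẐ. {s | ∃X ∀Y, (X ⊨ α ∧ δ(s,X∪Y) ∈ Ẑ∖Acc) ∨ δ(s,X∪Y) ∈ Z∖Acc}`. -/
def EnvSt : Set S := OrderHom.lfp (envStOuter δ Acc α)

/-- Inner fixpoint operator `Ẑ ↦ sysStep Ẑ Z` (for `Sys_st`). -/
def sysStInner (Z : Set S) : Set S →o Set S :=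
  ⟨fun Zh => sysStep δ Acc α Zh Z, fun _ _ h => sysStep_mono δ Acc α h subset_rfl⟩

/-- Outer operator `Z ↦ μẐ. sysStep Ẑ Z` (for `Sys_st`). -/
def sysStOuter : Set S →o Set S :=
  ⟨fun Z => OrderHom.lfp (sysStInner δ Acc α Z),
   fun _ _ h => OrderHom.lfp.monotone fun _ => sysStep_mono δ Acc α subset_rfl h⟩

/-- `Sys_st = νZ. μẐ. {s | ∀X ∃Y, (X ⊭ α ∨ δ(s,X∪Y) ∈ Ẑ∪Acc) ∧ δ(s,X∪Y) ∈ Z∪Acc}`. -/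
def SysSt : Set S := OrderHom.gfp (sysStOuter δ Acc α)

end Fixpoints

/-! ### Strategy extraction -/

/-- Approximates `Z₀ = ∅`,
`Z_{i+1} = {s | ∀X ∃Y, (X ⊭ α ∨ δ(s,X∪Y) ∈ Z_i ∪ Acc) ∧ δ(s,X∪Y) ∈ Sys_f ∪ Acc}`. -/
def fairApprox {Vx Vy S : Type} (δ : S → Set (Vx ⊕ Vy) → S) (Acc : Set S) (α : BForm Vx) :
    ℕ → Set S
  | 0 => ∅
  | i + 1 => sysStep δ Acc α (fairApprox δ Acc α i) (SysFair δ Acc α)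

/-- One step of the arena under output function `ω`: `δ(s, X ∪ ω(s, X))`. -/
def stepWith {Vx Vy S : Type} (δ : S → Set (Vx ⊕ Vy) → S) (ω : S → Set Vx → Set Vy)
    (s : S) (X : Set Vx) : S :=
  δ s (combine X (ω s X))

/-- The strategy generated by an output function `ω` from `s₀`:
`g(X₀,…,X_j) = ω(t_j, X_j)` where `t₀ = s₀` and `t_{k+1} = δ(t_k, X_k ∪ ω(t_k, X_k))`. -/
def genStrategy {Vx Vy S : Type} (δ : S → Set (Vx ⊕ Vy) → S) (ω : S → Set Vx → Set Vy)
    (s₀ : S) (l : List (Set Vx)) : Set Vy :=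
  ω (l.dropLast.foldl (stepWith δ ω) s₀) (l.getLast?.getD ∅)

/-- Admissibility of an output function for the fair game: for every `i`, every
non-accepting `s ∈ Z_{i+1} ∖ Z_i` and every `X`, the value `Y = ω(s, X)` satisfies
`(X ⊭ α ∨ δ(s,X∪Y) ∈ Z_i ∪ Acc) ∧ δ(s,X∪Y) ∈ Sys_f ∪ Acc`. -/
def AdmissibleFair {Vx Vy S : Type} (δ : S → Set (Vx ⊕ Vy) → S) (Acc : Set S)
    (α : BForm Vx) (ω : S → Set Vx → Set Vy) : Prop :=
  ∀ i : ℕ, ∀ s ∈ fairApprox δ Acc α (i + 1), s ∉ fairApprox δ Acc α i → s ∉ Acc →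
    ∀ X : Set Vx,
      (¬ α.eval X ∨ stepWith δ ω s X ∈ fairApprox δ Acc α i ∪ Acc) ∧
        stepWith δ ω s X ∈ SysFair δ Acc α ∪ Acc

/-- `W = νZ. {s | ∀X ∃Y, (X ⊭ α ∨ δ(s,X∪Y) ∈ Sys_st ∪ Acc) ∧ δ(s,X∪Y) ∈ Z ∪ Acc}`. -/
def Wst {Vx Vy S : Type} (δ : S → Set (Vx ⊕ Vy) → S) (Acc : Set S) (α : BForm Vx) : Set S :=
  OrderHom.gfp (sysFairInner δ Acc α (SysSt δ Acc α))

/-- Admissibility of an output function for the stable game: for every non-accepting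
`s ∈ W` and every `X`, the value `Y = ω(s, X)` satisfies
`(X ⊭ α ∨ δ(s,X∪Y) ∈ Sys_st ∪ Acc) ∧ δ(s,X∪Y) ∈ W ∪ Acc`. -/
def AdmissibleStable {Vx Vy S : Type} (δ : S → Set (Vx ⊕ Vy) → S) (Acc : Set S)
    (α : BForm Vx) (ω : S → Set Vx → Set Vy) : Prop :=
  ∀ s ∈ Wst δ Acc α, s ∉ Acc → ∀ X : Set Vx,
    (¬ α.eval X ∨ stepWith δ ω s X ∈ SysSt δ Acc α ∪ Acc) ∧
      stepWith δ ω s X ∈ Wst δ Acc α ∪ Acc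

/-! ### Realizability notions -/

/-- The infinite combined trace induced by environment sequence `lam` and agent
strategy `g`: position `i` carries `X_i ∪ g(X₀,…,X_i)`. -/
def inducedTrace {Vx Vy : Type} (g : List (Set Vx) → Set Vy) (lam : ℕ → Set Vx)
    (i : ℕ) : Set (Vx ⊕ Vy) :=
  combine (lam i) (g (histList lam (i + 1)))

/-- The finite trace `ρ^k = (X₀ ∪ g(X₀)), …, (X_k ∪ g(X₀,…,X_k))`. -/
def finPrefix {Vx Vy : Type} (g : List (Set Vx) → Set Vy) (lam : ℕ → Set Vx)
    (k : ℕ) : List (Set (Vx ⊕ Vy)) :=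
  (List.range (k + 1)).map (inducedTrace g lam)

/-- `φ` is `α`-fair realizable. -/
def fairRealizable {Vx Vy : Type} (α : BForm Vx) (φ : Formula (Vx ⊕ Vy)) : Prop :=
  ∃ g : List (Set Vx) → Set Vy, ∀ lam : ℕ → Set Vx,
    fairSeq α lam → ∃ k, Formula.finSat (finPrefix g lam k) φ

/-- `φ` is `α`-stable realizable. -/
def stableRealizable {Vx Vy : Type} (α : BForm Vx) (φ : Formula (Vx ⊕ Vy)) : Prop :=
  ∃ g : List (Set Vx) → Set Vy, ∀ lam : ℕ → Set Vx,
    stableSeq α lam → ∃ k, Formula.finSat (finPrefix g lam k) φ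

/-- `φ` is realizable under the LTL environment assumption `ψA`. -/
def realizableUnder {Vx Vy : Type} (ψA φ : Formula (Vx ⊕ Vy)) : Prop :=
  ∃ g : List (Set Vx) → Set Vy, ∀ lam : ℕ → Set Vx,
    Formula.infSat (inducedTrace g lam) ψA → ∃ k, Formula.finSat (finPrefix g lam k) φ

/-- Combine `X ⊆ Vx` with an agent assignment over `Y ∪ {alive}` (modeled as
`Option Vy`, with `alive = none`) into an assignment over `X ∪ Y ∪ {alive}`. -/
def combineA {Vx Vy : Type} (X : Set Vx) (Y' : Set (Option Vy)) :
    Set (Option (Vx ⊕ Vy)) :=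
  {v | match v with
       | none => none ∈ Y'
       | some (Sum.inl x) => x ∈ X
       | some (Sum.inr y) => some y ∈ Y'}

/-- LTL realizability of `ψ` over `X ∪ Y ∪ {alive}` w.r.t. `⟨X, Y ∪ {alive}⟩`,
where `alive` is controlled by the agent. -/
def ltlRealizable {Vx Vy : Type} (ψ : Formula (Option (Vx ⊕ Vy))) : Prop :=
  ∃ f : List (Set Vx) → Set (Option Vy), ∀ lam : ℕ → Set Vx,
    Formula.infSat (fun i => combineA (lam i) (f (histList lam (i + 1)))) ψ

end LTLfSynth

/-!
A strategy for `ψ_A → ψ` is a strategy for the `X ∪ Y` part together with a decision when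
to switch `alive` off. On a trace where `alive` holds exactly at the positions `0, …, k`,
the translation `t(φ)` holds iff the finite prefix of length `k + 1` satisfies `φ`, and
`alive ∧ (alive U G ¬alive)` says precisely that the alive positions form such an initial
segment. Hence a strategy for `ψ_A → ψ` yields one for `φ` by forgetting `alive`, and
conversely a strategy for `φ` is extended by keeping `alive` on until the first prefix
satisfying `φ` has been produced.
-/

namespace LTLfSynth

namespace Formula

variable {P : Type}

theorem infSatAt_map_iff {Q : Type} (h : P → Q) {τ : ℕ → Set P} {τ' : ℕ → Set Q}
    (hτ : ∀ i a, h a ∈ τ' i ↔ a ∈ τ i) (ψ : Formula P) (i : ℕ) :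
    infSatAt τ' (ψ.map h) i ↔ infSatAt τ ψ i := by
  induction ψ generalizing i with
  | tt => rfl
  | atom a => exact hτ i a
  | not ψ ih => exact not_congr (ih i)
  | and φ ψ ih₁ ih₂ => exact and_congr (ih₁ i) (ih₂ i)
  | next ψ ih => exact ih (i + 1)
  | until_ φ ψ ih₁ ih₂ =>
    simp only [map, infSatAt, ih₁, ih₂]

theorem infSatAt_imp (τ : ℕ → Set P) (a b : Formula P) (i : ℕ) :
    infSatAt τ (imp a b) i ↔ (infSatAt τ a i → infSatAt τ b i) := by
  simp only [imp, or, infSatAt]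
  tauto

end Formula

open Formula

section Translation

variable {P : Type}

theorem infSatAt_G_not_alive_iff (τ' : ℕ → Set (Option P)) (j : ℕ) :
    infSatAt τ' (G (.not alive)) j ↔ ∀ i, j ≤ i → none ∉ τ' i := by
  simp [G, F, infSatAt, alive]

theorem infSat_alive_and_alive_until_G_not_alive_iff (τ' : ℕ → Set (Option P)) :
    infSat τ' (.and alive (.until_ alive (G (.not alive)))) ↔
      ∃ k, ∀ i, none ∈ τ' i ↔ i ≤ k := by
  simp only [infSat, infSatAt, infSatAt_G_not_alive_iff]
  simp only [alive, infSatAt]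
  constructor
  · rintro ⟨h₀, n, -, hdead, hlive⟩
    have hn : n ≠ 0 := by rintro rfl; exact hdead 0 le_rfl h₀
    refine ⟨n - 1, fun i => ⟨fun hi => ?_, fun hi => hlive i (Nat.zero_le i) (by omega)⟩⟩
    by_contra hlt
    exact hdead i (by omega) hi
  · rintro ⟨k, hk⟩
    refine ⟨(hk 0).2 (Nat.zero_le k), k + 1, Nat.zero_le _, fun i hi h => ?_,
      fun i _ hi => (hk i).2 (Nat.lt_succ_iff.1 hi)⟩
    have := (hk i).1 h
    omega

theorem infSatAt_t_iff_finSatAt {τ' : ℕ → Set (Option P)} {ρ : List (Set P)}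
    (halive : ∀ i, none ∈ τ' i ↔ i < ρ.length)
    (hatom : ∀ i < ρ.length, ∀ a, some a ∈ τ' i ↔ a ∈ ρ.getD i ∅)
    (φ : Formula P) {i : ℕ} (hi : i < ρ.length) :
    infSatAt τ' (t φ) i ↔ finSatAt ρ φ i := by
  induction φ generalizing i with
  | tt => rfl
  | atom a => exact hatom i hi a
  | not ψ ih => exact not_congr (ih hi)
  | and φ ψ ih₁ ih₂ => exact and_congr (ih₁ hi) (ih₂ hi)
  | next ψ ih =>
    simp only [t, infSatAt, finSatAt, alive, halive]
    exact and_congr_right ih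
  | until_ φ ψ ih₁ ih₂ =>
    simp only [t, infSatAt, finSatAt, alive, halive]
    constructor
    · rintro ⟨j, hij, ⟨hj, hψ⟩, hφ⟩
      exact ⟨j, hij, hj, (ih₂ hj).1 hψ, fun k h₁ h₂ => (ih₁ (h₂.trans hj)).1 (hφ k h₁ h₂)⟩
    · rintro ⟨j, hij, hj, hψ, hφ⟩
      exact ⟨j, hij, ⟨hj, (ih₂ hj).2 hψ⟩, fun k h₁ h₂ => (ih₁ (h₂.trans hj)).2 (hφ k h₁ h₂)⟩

def livePrefix (τ' : ℕ → Set (Option P)) (k : ℕ) : List (Set P) :=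
  (List.range (k + 1)).map fun i => some ⁻¹' τ' i

theorem infSat_transLTL_iff (τ' : ℕ → Set (Option P)) (φ : Formula P) :
    infSat τ' (transLTL φ) ↔
      ∃ k, (∀ i, none ∈ τ' i ↔ i ≤ k) ∧ finSat (livePrefix τ' k) φ := by
  have ht_iff (k : ℕ) (hk : ∀ i, none ∈ τ' i ↔ i ≤ k) :
      infSat τ' (t φ) ↔ finSat (livePrefix τ' k) φ := by
    refine infSatAt_t_iff_finSatAt (fun i => ?_) (fun i hi a => ?_) φ ?_ <;>
      simp_all [livePrefix, List.getD_eq_getElem?_getD]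
  change infSat τ' (t φ) ∧ infSat τ' _ ↔ _
  rw [infSat_alive_and_alive_until_G_not_alive_iff]
  constructor
  · rintro ⟨ht, k, hk⟩
    exact ⟨k, hk, (ht_iff k hk).1 ht⟩
  · rintro ⟨k, hk, hφ⟩
    exact ⟨(ht_iff k hk).2 hφ, k, hk⟩

end Translation

section Realizability

variable {Vx Vy : Type}

def inducedAliveTrace (f : List (Set Vx) → Set (Option Vy)) (lam : ℕ → Set Vx) (i : ℕ) :
    Set (Option (Vx ⊕ Vy)) :=
  combineA (lam i) (f (histList lam (i + 1)))

def forgetAlive (f : List (Set Vx) → Set (Option Vy)) (l : List (Set Vx)) : Set Vy :=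
  some ⁻¹' f l

theorem some_mem_inducedAliveTrace_iff {f : List (Set Vx) → Set (Option Vy)}
    {lam : ℕ → Set Vx} {i : ℕ} {v : Vx ⊕ Vy} :
    some v ∈ inducedAliveTrace f lam i ↔ v ∈ inducedTrace (forgetAlive f) lam i := by
  cases v <;> rfl

theorem livePrefix_inducedAliveTrace (f : List (Set Vx) → Set (Option Vy)) (lam : ℕ → Set Vx)
    (k : ℕ) : livePrefix (inducedAliveTrace f lam) k = finPrefix (forgetAlive f) lam k := by
  simp only [livePrefix, finPrefix]
  congr! 2 with i
  ext v
  exact some_mem_inducedAliveTrace_iff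

theorem infSat_map_some_inducedAliveTrace_iff (f : List (Set Vx) → Set (Option Vy))
    (lam : ℕ → Set Vx) (ψ : Formula (Vx ⊕ Vy)) :
    infSat (inducedAliveTrace f lam) (ψ.map some) ↔ infSat (inducedTrace (forgetAlive f) lam) ψ :=
  infSatAt_map_iff some (fun _ _ => some_mem_inducedAliveTrace_iff) ψ 0

theorem histList_congr {A : Type} {lam lam' : ℕ → A} {n : ℕ} (h : ∀ i < n, lam i = lam' i) :
    histList lam n = histList lam' n :=
  List.map_congr_left fun i hi => h i (List.mem_range.1 hi)

theorem finPrefix_congr (g : List (Set Vx) → Set Vy) {lam lam' : ℕ → Set Vx} {k : ℕ}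
    (h : ∀ i ≤ k, lam i = lam' i) : finPrefix g lam k = finPrefix g lam' k := by
  refine List.map_congr_left fun i hi => ?_
  have hi : i ≤ k := Nat.lt_succ_iff.1 (List.mem_range.1 hi)
  rw [inducedTrace, inducedTrace, h i hi, histList_congr fun j hj => h j (by omega)]

/-- `alive` stays on up to and including the first position `k` with `ρ^k ⊨ φ`. -/
def keepAliveUntil (g : List (Set Vx) → Set Vy) (φ : Formula (Vx ⊕ Vy)) (l : List (Set Vx)) :
    Set (Option Vy) :=
  {v | v.elim (∀ k, k + 1 < l.length → ¬ finSat (finPrefix g (fun i => l.getD i ∅) k) φ)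
    (· ∈ g l)}

theorem forgetAlive_keepAliveUntil (g : List (Set Vx) → Set Vy) (φ : Formula (Vx ⊕ Vy)) :
    forgetAlive (keepAliveUntil g φ) = g :=
  rfl

theorem none_mem_inducedAliveTrace_keepAliveUntil_iff (g : List (Set Vx) → Set Vy)
    (φ : Formula (Vx ⊕ Vy)) (lam : ℕ → Set Vx) (i : ℕ) :
    none ∈ inducedAliveTrace (keepAliveUntil g φ) lam i ↔
      ∀ k < i, ¬ finSat (finPrefix g lam k) φ := by
  change (∀ k, k + 1 < (histList lam (i + 1)).length → _) ↔ _
  simp only [histList, List.length_map, List.length_range, Nat.add_lt_add_iff_right]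
  refine forall₂_congr fun k hk => ?_
  rw [finPrefix_congr g fun j hj => ?_]
  simp [List.getD_eq_getElem?_getD, List.getElem?_range (show j < i + 1 by omega)]

theorem ltlRealizable_of_realizableUnder {φ ψA : Formula (Vx ⊕ Vy)}
    (h : realizableUnder ψA φ) :
    ltlRealizable (Vx := Vx) (Vy := Vy) (imp (ψA.map some) (transLTL φ)) := by
  classical
  obtain ⟨g, hg⟩ := h
  refine ⟨keepAliveUntil g φ, fun lam => (infSatAt_imp _ _ _ 0).2 fun hA => ?_⟩
  have hsat : ∃ k, finSat (finPrefix g lam k) φ :=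
    hg lam ((infSat_map_some_inducedAliveTrace_iff (keepAliveUntil g φ) lam ψA).1 hA)
  refine (infSat_transLTL_iff (inducedAliveTrace (keepAliveUntil g φ) lam) φ).2
    ⟨Nat.find hsat, fun i => ?_, ?_⟩
  · rw [none_mem_inducedAliveTrace_keepAliveUntil_iff, Nat.le_find_iff]
  · rw [livePrefix_inducedAliveTrace, forgetAlive_keepAliveUntil]
    exact Nat.find_spec hsat

theorem realizableUnder_of_ltlRealizable {φ ψA : Formula (Vx ⊕ Vy)}
    (h : ltlRealizable (Vx := Vx) (Vy := Vy) (imp (ψA.map some) (transLTL φ))) :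
    realizableUnder ψA φ := by
  obtain ⟨f, hf⟩ := h
  refine ⟨forgetAlive f, fun lam hA => ?_⟩
  have himp := (infSatAt_imp _ _ _ 0).1 (hf lam)
    ((infSat_map_some_inducedAliveTrace_iff f lam ψA).2 hA)
  obtain ⟨k, -, hk⟩ := (infSat_transLTL_iff (inducedAliveTrace f lam) φ).1 himp
  exact ⟨k, livePrefix_inducedAliveTrace f lam k ▸ hk⟩

end Realizability

end LTLfSynth

open LTLfSynth in
theorem realizable_under_iff_ltl_realizable_general {Vx Vy : Type}
    (φ ψA : Formula (Vx ⊕ Vy)) :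
    realizableUnder ψA φ ↔
      ltlRealizable (Vx := Vx) (Vy := Vy)
        (Formula.imp (ψA.map some) (transLTL φ)) :=
  ⟨ltlRealizable_of_realizableUnder, realizableUnder_of_ltlRealizable⟩

open LTLfSynth in
/-- For an arbitrary LTL assumption `ψ_A` over `X ∪ Y`: `φ` is
realizable w.r.t. `⟨X, Y⟩` under assumption `ψ_A` iff the LTL formula `ψ_A → ψ` is
realizable w.r.t. `⟨X, Y ∪ {alive}⟩`, where `ψ = t(φ) ∧ alive ∧ (alive U G ¬alive)`. -/
theorem realizable_under_iff_ltl_realizable {Vx Vy : Type} [Fintype Vx] [Fintype Vy]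
    (φ ψA : Formula (Vx ⊕ Vy)) :
    realizableUnder ψA φ ↔
      ltlRealizable (Vx := Vx) (Vy := Vy)
        (Formula.imp (ψA.map some) (transLTL φ)) :=
  realizable_under_iff_ltl_realizable_general φ ψA
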